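/- Assume G is connected with at least one edge and P χ_(a,b) ≠ 0 for every ordered pair (a,b) of adjacent vertices. Let h = dim H and let n be twice the number of edges of G. If the normalized vectors x_(a,b) = P χ_(a,b)/‖P χ_(a,b)‖ satisfy the second-moment condition of a spherical 2-design, namely ∑_{(a,b)} ⟨x_(a,b), w⟩² = (n/h)‖w‖² for every w ∈ H (the sum over all ordered pairs of adjacent vertices), then all the norms ‖P χ_(a,b)‖ are equal. -/

import Mathlib

open scoped BigOperators RealInnerProductSpace

noncomputable section

variable {V : Type*} [Fintype V] [DecidableEq V]

/-- The indicator chain `χ_(a,b)`: 1 at `(a,b)`, −1 at `(b,a)`, 0 elsewhere. -/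
def edgeChi (a b : V) : EuclideanSpace ℝ (V × V) :=
  WithLp.toLp 2 (fun p => if p = (a, b) then 1 else if p = (b, a) then -1 else 0)

/-- The cycle space `H` of a simple graph `G`: the kernel of the boundary map
restricted to the edge space `C₁`. -/
def cycleSpace (G : SimpleGraph V) : Submodule ℝ (EuclideanSpace ℝ (V × V)) where
  carrier := { f | (∀ u v : V, f (u, v) = - f (v, u)) ∧
               (∀ u v : V, ¬ G.Adj u v → f (u, v) = 0) ∧
               (∀ v : V, ∑ u : V, f (u, v) = 0) }
  add_mem' := by
    rintro f g ⟨hf1, hf2, hf3⟩ ⟨hg1, hg2, hg3⟩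
    refine ⟨fun u v => ?_, fun u v h => ?_, fun v => ?_⟩
    · show f (u, v) + g (u, v) = -(f (v, u) + g (v, u))
      rw [hf1 u v, hg1 u v]; ring
    · show f (u, v) + g (u, v) = 0
      rw [hf2 u v h, hg2 u v h]; ring
    · show ∑ u : V, (f (u, v) + g (u, v)) = 0
      rw [Finset.sum_add_distrib, hf3 v, hg3 v]; ring
  zero_mem' := by
    refine ⟨fun u v => ?_, fun u v h => ?_, fun v => ?_⟩ <;> simp
  smul_mem' := by
    rintro c f ⟨hf1, hf2, hf3⟩
    refine ⟨fun u v => ?_, fun u v h => ?_, fun v => ?_⟩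
    · show c * f (u, v) = -(c * f (v, u))
      rw [hf1 u v]; ring
    · show c * f (u, v) = 0
      rw [hf2 u v h]; ring
    · show ∑ u : V, c * f (u, v) = 0
      rw [← Finset.mul_sum, hf3 v]; ring

/-- The projected edge vector `P χ_(a,b)`, where `P` is the orthogonal projection
onto the cycle space of `G`. -/
def projEdge (G : SimpleGraph V) (a b : V) : EuclideanSpace ℝ (V × V) :=
  (Submodule.orthogonalProjection (cycleSpace G) (edgeChi a b) : EuclideanSpace ℝ (V × V))

/-!
Write `s p = ‖P χ_p‖²` for the `n` ordered edges `p`. On `H` one has `⟪P χ_(a,b), w⟫ = 2 w(a,b)`,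
so Parseval over an orthonormal basis of `H` gives `∑ s p = 4h`, and the moment condition says
that the diagonal form `∑ (4 / s p) w_p²` equals `(n/h) ‖w‖²` on `H`. Since `P χ_p ≠ 0`, no edge
is a bridge, so every ordered edge lies in exactly half of the even subgraphs of `G`. Lifting each
even subgraph to a `{0, ±1}`-valued real circulation and summing the form over all of them gives
`∑ 4 / s p = n² / h`. Hence `(∑ s p) (∑ 1 / s p) = n²`, the equality case of AM–HM, and all `s p`
are equal.
-/

open Finset

theorem two_mul_card_apply_ne_zero {Γ : Type*} [AddGroup Γ] [Fintype Γ] (φ : Γ →+ ZMod 2)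
    {x₀ : Γ} (hx₀ : φ x₀ ≠ 0) : 2 * #{x | φ x ≠ 0} = Fintype.card Γ := by
  have hne : ∀ x, φ x ≠ 0 ↔ φ x = 1 := fun x =>
    ⟨Fin.eq_one_of_ne_zero _, fun h => h ▸ one_ne_zero⟩
  have hfiber : #{x | φ x = 0} = #{x | φ x ≠ 0} := by
    simp_rw [hne]
    exact AddMonoidHom.card_fiber_eq_of_mem_range φ ⟨0, map_zero φ⟩ ⟨x₀, (hne x₀).1 hx₀⟩
  rw [two_mul]
  nth_rw 1 [← hfiber]
  exact card_filter_add_card_filter_not _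

theorem sum_eq_mul_card_of_forall_sum_mul_sq_eq {ι κ : Type*} {T : Finset ι} {J : Finset κ}
    {F : κ → ι → ℝ} {N : ℝ} (hN : N ≠ 0) (hF : ∀ p ∈ T, ∑ j ∈ J, F j p ^ 2 = N)
    {c : ι → ℝ} {μ : ℝ} (hc : ∀ j ∈ J, ∑ p ∈ T, c p * F j p ^ 2 = μ * ∑ p ∈ T, F j p ^ 2) :
    ∑ p ∈ T, c p = μ * #T := by
  refine mul_left_cancel₀ hN ?_
  calc N * ∑ p ∈ T, c p = ∑ j ∈ J, ∑ p ∈ T, c p * F j p ^ 2 := by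
        rw [sum_comm, mul_sum]
        exact sum_congr rfl fun p hp => by rw [← mul_sum, hF p hp, mul_comm]
    _ = μ * ∑ p ∈ T, ∑ j ∈ J, F j p ^ 2 := by rw [sum_congr rfl hc, ← mul_sum, sum_comm]
    _ = N * (μ * #T) := by rw [sum_congr rfl hF, sum_const, nsmul_eq_mul]; ring

theorem eq_of_sum_mul_sum_inv_eq_card_sq {ι : Type*} {T : Finset ι} {s : ι → ℝ}
    (hs : ∀ p ∈ T, 0 < s p) (h : (∑ p ∈ T, s p) * ∑ p ∈ T, (s p)⁻¹ = #T ^ 2) {p q : ι}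
    (hp : p ∈ T) (hq : q ∈ T) : s p = s q := by
  have hterm : ∀ p ∈ T, ∀ q ∈ T,
      (s p - s q) ^ 2 / (s p * s q) = s p * (s q)⁻¹ + s q * (s p)⁻¹ - 2 := fun p hp q hq => by
    field_simp [(hs p hp).ne', (hs q hq).ne']
    ring
  have hsum : ∑ p ∈ T, ∑ q ∈ T, (s p - s q) ^ 2 / (s p * s q) = 0 := by
    calc _ = ∑ p ∈ T, ∑ q ∈ T, (s p * (s q)⁻¹ + s q * (s p)⁻¹ - 2) :=
          sum_congr rfl fun p hp => sum_congr rfl fun q hq => hterm p hp q hq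
      _ = 2 * ((∑ p ∈ T, s p) * ∑ p ∈ T, (s p)⁻¹) - 2 * #T ^ 2 := by
          simp only [sum_sub_distrib, sum_add_distrib, sum_mul_sum, sum_const, nsmul_eq_mul]
          rw [sum_comm (f := fun p q => s q * (s p)⁻¹)]
          ring
      _ = 0 := by rw [h]; ring
  have hnonneg : ∀ p ∈ T, ∀ q ∈ T, 0 ≤ (s p - s q) ^ 2 / (s p * s q) := fun p hp q hq =>
    div_nonneg (sq_nonneg _) (mul_pos (hs p hp) (hs q hq)).le
  have hrow := (sum_eq_zero_iff_of_nonneg fun p hp => sum_nonneg (hnonneg p hp)).1 hsum p hp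
  have hpq := (sum_eq_zero_iff_of_nonneg (hnonneg p hp)).1 hrow q hq
  rw [div_eq_zero_iff, sq_eq_zero_iff, sub_eq_zero] at hpq
  exact hpq.resolve_right (mul_pos (hs p hp) (hs q hq)).ne'

section Circulation

variable {V : Type*} [Fintype V]

namespace SimpleGraph

/-- Over `ZMod 2` antisymmetry is symmetry, so `G.circulation (ZMod 2)` is the set of even
subgraphs of `G`. -/
def circulation (G : SimpleGraph V) (R : Type*) [AddCommGroup R] : AddSubgroup (V × V → R) where
  carrier := {f | (∀ u v, f (u, v) = -f (v, u)) ∧ (∀ u v, ¬G.Adj u v → f (u, v) = 0) ∧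
    ∀ v, ∑ u, f (u, v) = 0}
  add_mem' := by
    rintro f g ⟨hf₁, hf₂, hf₃⟩ ⟨hg₁, hg₂, hg₃⟩
    refine ⟨fun u v => ?_, fun u v h => ?_, fun v => ?_⟩
    · simp only [Pi.add_apply, hf₁ u v, hg₁ u v, neg_add]
    · simp only [Pi.add_apply, hf₂ u v h, hg₂ u v h, add_zero]
    · simp only [Pi.add_apply, sum_add_distrib, hf₃, hg₃, add_zero]
  zero_mem' := by simp
  neg_mem' := by
    rintro f ⟨hf₁, hf₂, hf₃⟩
    refine ⟨fun u v => ?_, fun u v h => ?_, fun v => ?_⟩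
    · simp only [Pi.neg_apply, hf₁ u v]
    · simp only [Pi.neg_apply, hf₂ u v h, neg_zero]
    · simp only [Pi.neg_apply, sum_neg_distrib, hf₃, neg_zero]

variable {G : SimpleGraph V} {R : Type*} [AddCommGroup R] {f : V × V → R}

lemma apply_swap_of_mem_circulation (hf : f ∈ G.circulation R) (u v : V) :
    f (v, u) = -f (u, v) := hf.1 v u

lemma apply_eq_zero_of_not_adj (hf : f ∈ G.circulation R) {u v : V} (h : ¬G.Adj u v) :
    f (u, v) = 0 := hf.2.1 u v h

lemma sum_apply_eq_zero (hf : f ∈ G.circulation R) (v : V) : ∑ u, f (u, v) = 0 := hf.2.2 v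

lemma circulation_mono {G' : SimpleGraph V} (h : G ≤ G') : G.circulation R ≤ G'.circulation R :=
  fun _ ⟨hf₁, hf₂, hf₃⟩ => ⟨hf₁, fun u v huv => hf₂ u v fun h' => huv (h h'), hf₃⟩

def supportGraph (f : V × V → R) : SimpleGraph V := fromRel fun u v => f (u, v) ≠ 0

lemma supportGraph_adj (hf : f ∈ G.circulation R) {u v : V} :
    (supportGraph f).Adj u v ↔ f (u, v) ≠ 0 := by
  rw [supportGraph, fromRel_adj, apply_swap_of_mem_circulation hf, neg_ne_zero, or_self,
    and_iff_right_iff_imp]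
  rintro huv rfl
  exact huv (apply_eq_zero_of_not_adj hf (G.loopless.irrefl _))

lemma supportGraph_le (hf : f ∈ G.circulation R) : supportGraph f ≤ G := fun u v huv => by
  by_contra h
  exact (supportGraph_adj hf).1 huv (apply_eq_zero_of_not_adj hf h)

end SimpleGraph

lemma norm_sq_eq_sum_of_mem_cycleSpace {G : SimpleGraph V} [DecidableRel G.Adj]
    {w : EuclideanSpace ℝ (V × V)} (hw : w ∈ cycleSpace G) :
    ‖w‖ ^ 2 = ∑ p ∈ {p : V × V | G.Adj p.1 p.2}, w p ^ 2 := by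
  rw [EuclideanSpace.real_norm_sq_eq, sum_filter_of_ne]
  intro p _ hp
  by_contra h
  exact hp (by rw [SimpleGraph.apply_eq_zero_of_not_adj hw h, sq, zero_mul])

end Circulation

namespace SimpleGraph

section WalkFlow

variable {V : Type*} [DecidableEq V] {G : SimpleGraph V} {R : Type*} [AddCommGroupWithOne R]

def walkFlow (R : Type*) [AddCommGroupWithOne R] : ∀ {x y : V}, G.Walk x y → V × V → R
  | _, _, .nil => 0
  | _, _, .cons (u := x) (v := x') _ q => Pi.single (x, x') 1 - Pi.single (x', x) 1 + walkFlow R q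

lemma walkFlow_apply_swap {x y : V} (W : G.Walk x y) (u v : V) :
    walkFlow R W (v, u) = -walkFlow R W (u, v) := by
  induction W with
  | nil => simp [walkFlow]
  | @cons a b _ _ q ih =>
    simp only [walkFlow, Pi.add_apply, Pi.sub_apply, Pi.single_apply, Prod.mk.injEq, ih]
    by_cases h₁ : u = a ∧ v = b <;> by_cases h₂ : u = b ∧ v = a <;>
      simp [h₁, h₂, and_comm] <;> abel

lemma walkFlow_apply_of_notMem_edges {x y : V} (W : G.Walk x y) {u v : V}
    (h : s(u, v) ∉ W.edges) : walkFlow R W (u, v) = 0 := by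
  induction W with
  | nil => simp [walkFlow]
  | cons _ q ih =>
    simp only [Walk.edges_cons, List.mem_cons, not_or] at h
    simp only [walkFlow, Pi.add_apply, Pi.sub_apply, Pi.single_apply, Prod.mk.injEq, ih h.2]
    split_ifs <;> simp_all

lemma sum_walkFlow_apply [Fintype V] {x y : V} (W : G.Walk x y) (v : V) :
    ∑ u, walkFlow R W (u, v) = (Pi.single y 1 : V → R) v - (Pi.single x 1 : V → R) v := by
  induction W with
  | nil => simp [walkFlow]
  | cons _ q ih =>
    simp only [walkFlow, Pi.add_apply, Pi.sub_apply, sum_add_distrib, sum_sub_distrib, ih,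
      Pi.single_apply, Prod.mk.injEq, ite_and, sum_ite_eq', mem_univ, if_true]
    split_ifs <;> abel

lemma Walk.IsTrail.walkFlow_apply_of_mem_edges {x y : V} {W : G.Walk x y} (hW : W.IsTrail)
    {u v : V} (h : s(u, v) ∈ W.edges) : walkFlow R W (u, v) = 1 ∨ walkFlow R W (u, v) = -1 := by
  induction W with
  | nil => simp at h
  | @cons a b _ hab q ih =>
    rw [Walk.isTrail_cons] at hW
    rw [Walk.edges_cons, List.mem_cons] at h
    simp only [walkFlow, Pi.add_apply, Pi.sub_apply, Pi.single_apply, Prod.mk.injEq]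
    rcases h with h | h
    · rw [walkFlow_apply_of_notMem_edges q (h ▸ hW.2)]
      rcases Sym2.eq_iff.1 h with ⟨rfl, rfl⟩ | ⟨rfl, rfl⟩ <;> simp [hab.ne, hab.ne.symm]
    · have h₁ : ¬(u = a ∧ v = b) := by rintro ⟨rfl, rfl⟩; exact hW.2 h
      have h₂ : ¬(u = b ∧ v = a) := by rintro ⟨rfl, rfl⟩; exact hW.2 (Sym2.eq_swap ▸ h)
      simpa [h₁, h₂] using ih hW.1 h

lemma walkFlow_mem_circulation [Fintype V] {x : V} (c : G.Walk x x) :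
    walkFlow R c ∈ G.circulation R := by
  refine ⟨fun u v => ?_, fun u v huv => ?_, fun v => ?_⟩
  · rw [walkFlow_apply_swap]
  · exact walkFlow_apply_of_notMem_edges c fun h => huv (c.adj_of_mem_edges h)
  · rw [sum_walkFlow_apply, sub_self]

end WalkFlow

variable {G : SimpleGraph V} {R : Type*} [AddCommGroup R] {f : V × V → R}

lemma sum_sum_compl_eq_zero (hf : f ∈ G.circulation R) (S : Finset V) :
    ∑ v ∈ S, ∑ u ∈ Sᶜ, f (u, v) = 0 := by
  have hS : ∑ v ∈ S, ∑ u ∈ S, f (u, v) = 0 := by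
    rw [← sum_product']
    refine sum_involution (fun p _ => p.swap) (fun p _ => ?_) (fun p _ hp hswap => ?_)
      (fun p hp => mem_product.2 (mem_product.1 hp).symm) (fun p _ => rfl)
    · rw [Prod.fst_swap, Prod.snd_swap, apply_swap_of_mem_circulation hf, neg_add_cancel]
    · rw [show p.2 = p.1 from congrArg Prod.fst hswap] at hp
      exact hp (apply_eq_zero_of_not_adj hf (G.loopless.irrefl _))
  have htotal : ∑ v ∈ S, ∑ u, f (u, v) = 0 := sum_eq_zero fun v _ => sum_apply_eq_zero hf v
  simpa only [← sum_add_sum_compl S, sum_add_distrib, hS, zero_add] using htotal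

/-- Otherwise the cut around the component of `a` would carry only the flow `f (b, a) ≠ 0`. -/
lemma reachable_deleteEdges_supportGraph (hf : f ∈ G.circulation R) {a b : V}
    (hab : f (a, b) ≠ 0) : ((supportGraph f).deleteEdges {s(a, b)}).Reachable a b := by
  classical
  by_contra hnr
  set K := (supportGraph f).deleteEdges {s(a, b)}
  set S := univ.filter fun v => K.Reachable a v
  have hcut : ∑ v ∈ S, ∑ u ∈ Sᶜ, f (u, v) = f (b, a) := by
    rw [← sum_product']
    refine sum_eq_single_of_mem (a, b) (by simp [S, hnr]) ?_
    rintro ⟨v, u⟩ hp hne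
    simp only [mem_product, mem_compl, mem_filter, mem_univ, true_and, S] at hp
    by_contra huv
    by_cases he : s(u, v) = s(a, b)
    · rcases Sym2.eq_iff.1 he with ⟨rfl, rfl⟩ | ⟨rfl, rfl⟩
      · exact hp.2 (Reachable.refl _)
      · exact hne rfl
    · have hK : K.Adj v u := by
        rw [deleteEdges_adj, Set.mem_singleton_iff, Sym2.eq_swap]
        exact ⟨(supportGraph_adj hf).2 ((apply_swap_of_mem_circulation hf u v).symm ▸
          neg_ne_zero.2 huv), he⟩
      exact hp.2 (hp.1.trans hK.reachable)
  rw [sum_sum_compl_eq_zero hf, apply_swap_of_mem_circulation hf] at hcut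
  exact hab (neg_eq_zero.1 hcut.symm)

lemma exists_isCycle_of_apply_ne_zero (hf : f ∈ G.circulation R) {a b : V}
    (hab : f (a, b) ≠ 0) :
    ∃ (x : V) (c : (supportGraph f).Walk x x), c.IsCycle ∧ s(a, b) ∈ c.edges :=
  adj_and_reachable_delete_edges_iff_exists_cycle.1
    ⟨(supportGraph_adj hf).2 hab, reachable_deleteEdges_supportGraph hf hab⟩

lemma exists_mem_circulation_zmod_two_apply_ne_zero (hf : f ∈ G.circulation R) {a b : V}
    (hab : f (a, b) ≠ 0) : ∃ g ∈ G.circulation (ZMod 2), g (a, b) ≠ 0 := by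
  obtain ⟨x, c, hc, habc⟩ := exists_isCycle_of_apply_ne_zero hf hab
  refine ⟨walkFlow (ZMod 2) c,
    circulation_mono (supportGraph_le hf) (walkFlow_mem_circulation c), ?_⟩
  rcases hc.isTrail.walkFlow_apply_of_mem_edges (R := ZMod 2) habc with h | h <;> rw [h] <;>
    decide

/-- A ℤ/2-circulation is an even subgraph, hence an edge-disjoint union of cycles; orienting each
cycle lifts it to a real circulation with values in `{0, ±1}`. -/
theorem exists_real_lift_of_mem_circulation_zmod_two {f : V × V → ZMod 2}
    (hf : f ∈ G.circulation (ZMod 2)) :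
    ∃ z ∈ G.circulation ℝ, ∀ p, z p ^ 2 = if f p = 0 then 0 else 1 := by
  induction hn : #{p | f p ≠ 0} using Nat.strong_induction_on generalizing f with
  | _ n ih =>
  by_cases hf0 : ∀ p, f p = 0
  · exact ⟨0, zero_mem _, fun p => by simp [hf0 p]⟩
  simp only [not_forall] at hf0
  obtain ⟨⟨a, b⟩, hab⟩ := hf0
  obtain ⟨x, c, hc, habc⟩ := exists_isCycle_of_apply_ne_zero hf hab
  have hcG : ∀ {R : Type} [AddCommGroupWithOne R], walkFlow R c ∈ G.circulation R :=
    circulation_mono (supportGraph_le hf) (walkFlow_mem_circulation c)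
  set g := f - walkFlow (ZMod 2) c
  have hg_apply : ∀ u v, g (u, v) = if s(u, v) ∈ c.edges then 0 else f (u, v) := by
    intro u v
    split_ifs with huv
    · have hfuv : f (u, v) = 1 :=
        Fin.eq_one_of_ne_zero _ ((supportGraph_adj hf).1 (c.adj_of_mem_edges huv))
      rcases hc.isTrail.walkFlow_apply_of_mem_edges (R := ZMod 2) huv with h | h <;>
        simp only [g, Pi.sub_apply, h, hfuv] <;> decide
    · simp [g, walkFlow_apply_of_notMem_edges c huv]
  have hlt : #{p | g p ≠ 0} < n := by
    rw [← hn]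
    refine card_lt_card (ssubset_iff_of_subset ?_ |>.2 ⟨(a, b), ?_, ?_⟩)
    · intro p
      simp only [mem_filter, mem_univ, true_and, hg_apply p.1 p.2]
      split_ifs <;> simp
    · simpa using hab
    · simp [hg_apply, habc]
  obtain ⟨z, hz, hz_sq⟩ := ih _ hlt (f := g) (sub_mem hf hcG) rfl
  refine ⟨walkFlow ℝ c + z, add_mem hcG hz, fun ⟨u, v⟩ => ?_⟩
  have hzuv := hz_sq (u, v)
  rw [hg_apply] at hzuv
  by_cases huv : s(u, v) ∈ c.edges
  · rw [if_pos huv, if_pos rfl, sq_eq_zero_iff] at hzuv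
    rw [if_neg ((supportGraph_adj hf).1 (c.adj_of_mem_edges huv)), Pi.add_apply, hzuv, add_zero]
    rcases hc.isTrail.walkFlow_apply_of_mem_edges (R := ℝ) huv with h | h <;> simp [h]
  · rw [if_neg huv] at hzuv
    rw [Pi.add_apply, walkFlow_apply_of_notMem_edges c huv, zero_add, hzuv]

/-- Every ordered edge lies in exactly half of the even subgraphs, so their lifts have constant
total squared weight on the edges; summing `hc` over them isolates `∑ c p`. -/
theorem sum_eq_mul_card_of_forall_mem_circulation [DecidableRel G.Adj]
    (hG : ∀ a b, G.Adj a b → ∃ g ∈ G.circulation (ZMod 2), g (a, b) ≠ 0)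
    {c : V × V → ℝ} {μ : ℝ}
    (hc : ∀ z ∈ G.circulation ℝ, ∑ p ∈ {p | G.Adj p.1 p.2}, c p * z p ^ 2 =
      μ * ∑ p ∈ {p | G.Adj p.1 p.2}, z p ^ 2) :
    ∑ p ∈ {p | G.Adj p.1 p.2}, c p = μ * #{p : V × V | G.Adj p.1 p.2} := by
  classical
  set Γ := G.circulation (ZMod 2)
  choose F hF_mem hF_sq using fun g : Γ => exists_real_lift_of_mem_circulation_zmod_two g.2
  refine sum_eq_mul_card_of_forall_sum_mul_sq_eq (J := univ) (F := F)
    (N := Fintype.card Γ / 2) (by positivity) (fun p hp => ?_) (fun g _ => hc _ (hF_mem g))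
  obtain ⟨g₀, hg₀, hg₀p⟩ := hG p.1 p.2 (by simpa using hp)
  have hcount := two_mul_card_apply_ne_zero
    ((Pi.evalAddMonoidHom (fun _ => ZMod 2) p).comp Γ.subtype) (x₀ := ⟨g₀, hg₀⟩) hg₀p
  simp only [AddMonoidHom.comp_apply, Pi.evalAddMonoidHom_apply, AddSubgroup.coe_subtype]
    at hcount
  rw [eq_div_iff two_ne_zero, ← hcount]
  simp [hF_sq, sum_ite, mul_comm]

end SimpleGraph

section CycleSpace

variable {G : SimpleGraph V}

lemma projEdge_mem_cycleSpace (G : SimpleGraph V) (a b : V) : projEdge G a b ∈ cycleSpace G :=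
  Submodule.coe_mem _

lemma inner_edgeChi_of_mem_cycleSpace {a b : V} (hab : a ≠ b) {w : EuclideanSpace ℝ (V × V)}
    (hw : w ∈ cycleSpace G) : ⟪edgeChi a b, w⟫ = 2 * w (a, b) := by
  rw [PiLp.inner_apply, Fintype.sum_eq_add (a, b) (b, a) (by simp [hab]) fun p hp => by
    simp [edgeChi, hp.1, hp.2]]
  simp [edgeChi, hab, hab.symm, SimpleGraph.apply_swap_of_mem_circulation hw a b]
  ring

lemma inner_projEdge_of_mem_cycleSpace {a b : V} (hab : a ≠ b) {w : EuclideanSpace ℝ (V × V)}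
    (hw : w ∈ cycleSpace G) : ⟪projEdge G a b, w⟫ = 2 * w (a, b) := by
  rw [← inner_edgeChi_of_mem_cycleSpace hab hw, projEdge, ← Submodule.coe_mk w hw,
    ← Submodule.coe_inner, Submodule.inner_orthogonalProjectionOnto_eq_of_mem_right]

lemma projEdge_apply_ne_zero {a b : V} (hab : a ≠ b) (h : projEdge G a b ≠ 0) :
    projEdge G a b (a, b) ≠ 0 := by
  have hsq : ‖projEdge G a b‖ ^ 2 = 2 * projEdge G a b (a, b) := by
    rw [← real_inner_self_eq_norm_sq,
      inner_projEdge_of_mem_cycleSpace hab (projEdge_mem_cycleSpace G a b)]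
  intro h0
  rw [h0, mul_zero, sq_eq_zero_iff, norm_eq_zero] at hsq
  exact h hsq

lemma inner_inv_norm_smul_projEdge_sq {a b : V} (hab : a ≠ b) {w : EuclideanSpace ℝ (V × V)}
    (hw : w ∈ cycleSpace G) :
    ⟪‖projEdge G a b‖⁻¹ • projEdge G a b, w⟫ ^ 2 =
      4 * (‖projEdge G a b‖ ^ 2)⁻¹ * w (a, b) ^ 2 := by
  rw [real_inner_smul_left, inner_projEdge_of_mem_cycleSpace hab hw]
  ring

lemma sum_norm_sq_projEdge [DecidableRel G.Adj] :
    ∑ p ∈ {p : V × V | G.Adj p.1 p.2}, ‖projEdge G p.1 p.2‖ ^ 2 =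
      4 * Module.finrank ℝ (cycleSpace G) := by
  set b := stdOrthonormalBasis ℝ (cycleSpace G)
  have hb : ∀ p : V × V, G.Adj p.1 p.2 →
      ‖projEdge G p.1 p.2‖ ^ 2 = ∑ i, 4 * (b i : EuclideanSpace ℝ (V × V)) p ^ 2 := by
    intro p hp
    rw [projEdge, ← Submodule.coe_norm, ← b.sum_sq_inner_right]
    refine sum_congr rfl fun i _ => ?_
    rw [Submodule.coe_inner, real_inner_comm, ← projEdge,
      inner_projEdge_of_mem_cycleSpace hp.ne (b i).2]
    ring
  calc _ = ∑ p ∈ {p : V × V | G.Adj p.1 p.2}, ∑ i, 4 * (b i : EuclideanSpace ℝ (V × V)) p ^ 2 :=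
        sum_congr rfl fun p hp => hb p (mem_filter.1 hp).2
    _ = ∑ i, 4 * ‖(b i : EuclideanSpace ℝ (V × V))‖ ^ 2 := by
        rw [sum_comm]
        exact sum_congr rfl fun i _ => by
          rw [← mul_sum, norm_sq_eq_sum_of_mem_cycleSpace (b i).2]
    _ = 4 * Module.finrank ℝ (cycleSpace G) := by
        simp [← Submodule.coe_norm, b.orthonormal.1 _, mul_comm]

end CycleSpace

theorem design_moment_imp_equal_norms_general
    {V : Type*} [Fintype V] [DecidableEq V] (G : SimpleGraph V) [DecidableRel G.Adj]
    (hnz : ∀ a b : V, G.Adj a b → projEdge G a b ≠ 0)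
    (h n : ℕ) (hh : h = Module.finrank ℝ (cycleSpace G))
    (hn : n = 2 * G.edgeFinset.card)
    (hmom : ∀ w ∈ cycleSpace G,
      ∑ p ∈ Finset.univ.filter (fun p : V × V => G.Adj p.1 p.2),
        (⟪‖projEdge G p.1 p.2‖⁻¹ • projEdge G p.1 p.2, w⟫) ^ 2
          = ((n : ℝ) / (h : ℝ)) * ‖w‖ ^ 2) :
    ∀ a b c d : V, G.Adj a b → G.Adj c d →
      ‖projEdge G a b‖ = ‖projEdge G c d‖ := by
  intro a b c d hab hcd
  set T := univ.filter fun p : V × V => G.Adj p.1 p.2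
  set s : V × V → ℝ := fun p => ‖projEdge G p.1 p.2‖ ^ 2
  have hT : ∀ {u v}, G.Adj u v → (u, v) ∈ T := fun huv => mem_filter.2 ⟨mem_univ _, huv⟩
  have hs : ∀ p ∈ T, 0 < s p := fun p hp => pow_pos (norm_pos_iff.2 (hnz _ _ (mem_filter.1 hp).2)) 2
  have hcard : #T = n := by rw [hn, SimpleGraph.two_mul_card_edgeFinset]
  have hsum : ∑ p ∈ T, s p = 4 * h := by rw [hh]; exact sum_norm_sq_projEdge
  have hh0 : (0 : ℝ) < h := by
    have := (hs _ (hT hab)).trans_le (single_le_sum (fun p hp => (hs p hp).le) (hT hab))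
    linarith
  have hinv : ∑ p ∈ T, 4 * (s p)⁻¹ = n / h * #T :=
    SimpleGraph.sum_eq_mul_card_of_forall_mem_circulation
      (fun a b hab => SimpleGraph.exists_mem_circulation_zmod_two_apply_ne_zero
        (projEdge_mem_cycleSpace G a b) (projEdge_apply_ne_zero hab.ne (hnz a b hab)))
      fun z hz => by
        rw [← norm_sq_eq_sum_of_mem_cycleSpace (w := WithLp.toLp 2 z) hz, ← hmom _ hz]
        exact sum_congr rfl fun p hp =>
          (inner_inv_norm_smul_projEdge_sq (mem_filter.1 hp).2.ne hz).symm
  have hprod : (∑ p ∈ T, s p) * ∑ p ∈ T, (s p)⁻¹ = #T ^ 2 := by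
    rw [← mul_sum, hcard] at hinv
    rw [hsum, hcard, show ∑ p ∈ T, (s p)⁻¹ = n / h * n / 4 by linarith]
    field_simp
  have hsq : s (a, b) = s (c, d) := eq_of_sum_mul_sum_inv_eq_card_sq hs hprod (hT hab) (hT hcd)
  exact (sq_eq_sq₀ (norm_nonneg _) (norm_nonneg _)).1 hsq

/-- **Lemma 1.2, converse direction.** If the normalized projected edge vectors of a
connected graph satisfy the second-moment condition of a spherical 2-design, then all
the norms `‖P χ_(a,b)‖` are equal. -/
theorem design_moment_imp_equal_norms
    {V : Type*} [Fintype V] [DecidableEq V] (G : SimpleGraph V) [DecidableRel G.Adj]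
    (hconn : G.Connected) (hne : ∃ a b : V, G.Adj a b)
    (hnz : ∀ a b : V, G.Adj a b → projEdge G a b ≠ 0)
    (h n : ℕ) (hh : h = Module.finrank ℝ (cycleSpace G))
    (hn : n = 2 * G.edgeFinset.card)
    (hmom : ∀ w ∈ cycleSpace G,
      ∑ p ∈ Finset.univ.filter (fun p : V × V => G.Adj p.1 p.2),
        (⟪‖projEdge G p.1 p.2‖⁻¹ • projEdge G p.1 p.2, w⟫) ^ 2
          = ((n : ℝ) / (h : ℝ)) * ‖w‖ ^ 2) :
    ∀ a b c d : V, G.Adj a b → G.Adj c d →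
      ‖projEdge G a b‖ = ‖projEdge G c d‖ :=
  design_moment_imp_equal_norms_general G hnz h n hh hn hmom

end
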